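/- Let r ≥ 2 and let p' > r be an integer with gcd(r,p') = 1. Let ζ ∈ P_r be dominant (i.e. ⟨ζ, α_i⟩ is a nonnegative integer for all 1 ≤ i ≤ r−1) with ⟨ζ, ε_1 − ε_r⟩ ≤ p' − r. Define F(σ, α) = (rp'/2)‖α‖² − p'⟨α, δ⟩ + r⟨α, σ•(ζ+δ)⟩ − ⟨δ, σ•(ζ+δ) − ζ − δ⟩ for σ ∈ S_r, α ∈ V. Let μ ∈ P_r and suppose w ∈ S_r and λ ∈ Q_r satisfy rμ − δ + w•δ = rλ. Then for every σ ∈ S_r and every x ∈ ℚ there is a bijection between {α ∈ μ + Q_r : F(σ, α) = x} and {α ∈ Q_r : F(w⁻¹∘σ, α) = x}. (This expresses the identity (−1)^{ℓ(w)}·Γ^{r,r,p';μ}_{0,ζ}(σ) = Γ^{r,r,p';0}_{0,ζ}(w⁻¹σ) at the level of exponents.) -/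

import Mathlib

open Finset

noncomputable section

/-- Inner product `⟨u,v⟩ = Σ_i u i * v i` on `ℚ^r`. -/
def ip {r : ℕ} (u v : Fin r → ℚ) : ℚ := ∑ i, u i * v i

/-- Action of `S_r` permuting coordinates: `(w • v) i = v (w⁻¹ i)`. -/
def pact {r : ℕ} (w : Equiv.Perm (Fin r)) (v : Fin r → ℚ) : Fin r → ℚ := fun i => v (w⁻¹ i)

/-- The Weyl vector `δ`, whose (1-indexed) `i`-th coordinate is `(r+1-2i)/2`. -/
def weylδ (r : ℕ) : Fin r → ℚ := fun j => ((r : ℚ) - 1 - 2 * ((j : ℕ) : ℚ)) / 2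

/-- Membership in `V = {v : Fin r → ℚ | Σ_i v i = 0}`. -/
def memV {r : ℕ} (v : Fin r → ℚ) : Prop := ∑ i, v i = 0

/-- Membership in the root lattice `Q_r`. -/
def memQ {r : ℕ} (v : Fin r → ℚ) : Prop := memV v ∧ ∀ i, ∃ m : ℤ, v i = (m : ℚ)

/-- Membership in the weight lattice `P_r`. -/
def memP {r : ℕ} (v : Fin r → ℚ) : Prop := memV v ∧ ∀ i j, ∃ m : ℤ, v i - v j = (m : ℚ)

/-- The first fundamental weight `Λ₁ = ε₁ - (1/r)(ε₁ + ⋯ + ε_r)`. -/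
def Lam1 (r : ℕ) : Fin r → ℚ := fun j => (if (j : ℕ) = 0 then 1 else 0) - 1 / (r : ℚ)

/-- The simple roots, 0-indexed: `srootF i = ε_{i+1} - ε_{i+2}` in 1-indexed notation. -/
def srootF {r : ℕ} (i : Fin (r - 1)) : Fin r → ℚ :=
  fun j => (if (j : ℕ) = (i : ℕ) then 1 else 0) - (if (j : ℕ) = (i : ℕ) + 1 then 1 else 0)

/-- The highest root `θ = ε₁ - ε_r`. -/
def hroot (r : ℕ) : Fin r → ℚ :=
  fun j => (if (j : ℕ) = 0 then 1 else 0) - (if (j : ℕ) = r - 1 then 1 else 0)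

/-- The set `Π_{r,n}` of weights of `L_r(nΛ₁)`:
all `nΛ₁ - a₁α₁ - ⋯ - a_{r-1}α_{r-1}` with `n ≥ a₁ ≥ ⋯ ≥ a_{r-1} ≥ 0`. -/
def PiWts (r n : ℕ) : Set (Fin r → ℚ) :=
  {v | ∃ a : Fin (r - 1) → ℤ, (∀ i, 0 ≤ a i) ∧ (∀ i, a i ≤ (n : ℤ)) ∧
        (∀ i j, i ≤ j → a j ≤ a i) ∧
        v = (n : ℚ) • Lam1 r - ∑ i, (a i : ℚ) • srootF i}

/-- The exponent `F(σ,α) = (rp'/2)‖α‖² - p'⟨α,δ⟩ + r⟨α,σ•(ζ+δ)⟩ - ⟨δ, σ•(ζ+δ) - ζ - δ⟩`. -/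
def Fexp (r p' : ℕ) (ζ : Fin r → ℚ) (σ : Equiv.Perm (Fin r)) (α : Fin r → ℚ) : ℚ :=
  ((r : ℚ) * p' / 2) * ip α α - p' * ip α (weylδ r)
    + r * ip α (pact σ (ζ + weylδ r))
    - ip (weylδ r) (pact σ (ζ + weylδ r) - ζ - weylδ r)


/-!
Put `c = (δ - w•δ)/r`; the hypothesis says `c = μ - λ`, so `α ↦ w⁻¹•(α - c)` maps `μ + Q_r`
onto `w⁻¹•(λ + Q_r) = Q_r`. Expanding `F(σ, β + c)`, the terms in `c` combine to
`F(w⁻¹σ, w⁻¹•β)` plus a multiple of `‖w•δ‖² - ‖δ‖²`, which vanishes because `S_r` acts by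
isometries.
-/

open Matrix

section Permutation

variable {r : ℕ}

theorem ip_eq_dotProduct (u v : Fin r → ℚ) : ip u v = u ⬝ᵥ v := rfl

theorem pact_eq_comp (w : Equiv.Perm (Fin r)) (v : Fin r → ℚ) : pact w v = v ∘ w.symm := rfl

theorem pact_mul (w σ : Equiv.Perm (Fin r)) (v : Fin r → ℚ) :
    pact (w * σ) v = pact w (pact σ v) := by
  funext i
  simp [pact, Equiv.Perm.mul_apply]

theorem pact_inv_pact (w : Equiv.Perm (Fin r)) (v : Fin r → ℚ) : pact w⁻¹ (pact w v) = v := by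
  funext i
  simp [pact]

theorem pact_pact_inv (w : Equiv.Perm (Fin r)) (v : Fin r → ℚ) : pact w (pact w⁻¹ v) = v := by
  simpa using pact_inv_pact w⁻¹ v

theorem dotProduct_pact_pact (w : Equiv.Perm (Fin r)) (u v : Fin r → ℚ) :
    pact w u ⬝ᵥ pact w v = u ⬝ᵥ v := by
  simp only [pact_eq_comp, dotProduct_comp_equiv_symm, Function.comp_assoc,
    Equiv.symm_comp_self, Function.comp_id]

theorem pact_inv_dotProduct (w : Equiv.Perm (Fin r)) (u v : Fin r → ℚ) :
    pact w⁻¹ u ⬝ᵥ v = u ⬝ᵥ pact w v := by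
  rw [← dotProduct_pact_pact w, pact_pact_inv]

theorem dotProduct_pact_inv (w : Equiv.Perm (Fin r)) (u v : Fin r → ℚ) :
    u ⬝ᵥ pact w⁻¹ v = pact w u ⬝ᵥ v := by
  rw [← dotProduct_pact_pact w, pact_pact_inv]

def pactEquiv (w : Equiv.Perm (Fin r)) : (Fin r → ℚ) ≃ (Fin r → ℚ) where
  toFun := pact w
  invFun := pact w⁻¹
  left_inv := pact_inv_pact w
  right_inv := pact_pact_inv w

end Permutation

section RootLattice

def rootLattice (r : ℕ) : AddSubgroup (Fin r → ℚ) where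
  carrier := {v | memQ v}
  add_mem' := by
    rintro u v ⟨hu, hu'⟩ ⟨hv, hv'⟩
    refine ⟨by simp [memV, Finset.sum_add_distrib, show ∑ i, u i = 0 from hu,
      show ∑ i, v i = 0 from hv], fun i => ?_⟩
    obtain ⟨m, hm⟩ := hu' i
    obtain ⟨n, hn⟩ := hv' i
    exact ⟨m + n, by simp [hm, hn]⟩
  zero_mem' := ⟨by simp [memV], fun _ => ⟨0, by simp⟩⟩
  neg_mem' := by
    rintro v ⟨hv, hv'⟩
    refine ⟨by simp [memV, show ∑ i, v i = 0 from hv], fun i => ?_⟩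
    obtain ⟨m, hm⟩ := hv' i
    exact ⟨-m, by simp [hm]⟩

variable {r : ℕ}

theorem memQ_add_right_iff {u v : Fin r → ℚ} (hv : memQ v) : memQ (u + v) ↔ memQ u :=
  (rootLattice r).add_mem_cancel_right hv

theorem memQ_pact (w : Equiv.Perm (Fin r)) {v : Fin r → ℚ} (hv : memQ v) : memQ (pact w v) :=
  ⟨by simpa [memV, pact] using (Equiv.sum_comp w⁻¹ v).trans hv.1, fun i => hv.2 (w⁻¹ i)⟩

theorem memQ_pact_iff (w : Equiv.Perm (Fin r)) {v : Fin r → ℚ} : memQ (pact w v) ↔ memQ v :=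
  ⟨fun hv => pact_inv_pact w v ▸ memQ_pact w⁻¹ hv, memQ_pact w⟩

theorem exists_memQ_eq_add_iff {μ α : Fin r → ℚ} :
    (∃ β, memQ β ∧ α = μ + β) ↔ memQ (α - μ) :=
  ⟨fun ⟨β, hβ, hα⟩ => by rwa [hα, add_sub_cancel_left], fun hα => ⟨α - μ, hα, by abel⟩⟩

end RootLattice

theorem Fexp_add_shift (r p' : ℕ) (hr : (r : ℚ) ≠ 0) (ζ : Fin r → ℚ) (σ w : Equiv.Perm (Fin r))
    (β : Fin r → ℚ) :
    Fexp r p' ζ σ (β + (r : ℚ)⁻¹ • (weylδ r - pact w (weylδ r)))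
      = Fexp r p' ζ (w⁻¹ * σ) (pact w⁻¹ β) := by
  simp only [Fexp, ip_eq_dotProduct, pact_mul, dotProduct_pact_pact, pact_inv_dotProduct,
    dotProduct_pact_inv, pact_pact_inv, add_dotProduct, dotProduct_add, sub_dotProduct,
    dotProduct_sub, smul_dotProduct, dotProduct_smul, smul_eq_mul,
    dotProduct_comm (pact w (weylδ r)), dotProduct_comm _ β]
  field_simp
  ring

theorem stmt3_general (r p' : ℕ) (hr : 2 ≤ r)
    (ζ : Fin r → ℚ)
    (μ : Fin r → ℚ) (w : Equiv.Perm (Fin r))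
    (lam : Fin r → ℚ) (hlam : memQ lam)
    (h : (r : ℚ) • μ - weylδ r + pact w (weylδ r) = (r : ℚ) • lam)
    (σ : Equiv.Perm (Fin r)) (x : ℚ) :
    Nonempty
      ({α : Fin r → ℚ // (∃ β, memQ β ∧ α = μ + β) ∧ Fexp r p' ζ σ α = x} ≃
        {α : Fin r → ℚ // memQ α ∧ Fexp r p' ζ (w⁻¹ * σ) α = x}) := by
  have hr0 : (r : ℚ) ≠ 0 := by positivity
  have hshift : μ - lam = (r : ℚ)⁻¹ • (weylδ r - pact w (weylδ r)) := by
    rw [eq_inv_smul_iff₀ hr0, smul_sub, ← h]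
    abel
  refine ⟨((Equiv.subRight (μ - lam)).trans (pactEquiv w⁻¹)).subtypeEquiv fun α => ?_⟩
  have hα : α - (μ - lam) = (α - μ) + lam := by abel
  have hF := Fexp_add_shift r p' hr0 ζ σ w (α - (μ - lam))
  rw [← hshift, sub_add_cancel] at hF
  rw [hF, exists_memQ_eq_add_iff]
  simp only [Equiv.trans_apply, Equiv.subRight_apply, pactEquiv, Equiv.coe_fn_mk, memQ_pact_iff, hα,
    memQ_add_right_iff hlam]

/-- for `r < p'` coprime, `ζ` dominant with `⟨ζ, ε₁-ε_r⟩ ≤ p'-r`, `μ ∈ P_r`,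
and `w ∈ S_r`, `λ ∈ Q_r` with `rμ - δ + w•δ = rλ`: for every `σ ∈ S_r` and `x ∈ ℚ`
there is a bijection `{α ∈ μ + Q_r : F(σ,α) = x} ≃ {α ∈ Q_r : F(w⁻¹∘σ,α) = x}`. -/
theorem stmt3 (r p' : ℕ) (hr : 2 ≤ r) (hrp' : r < p') (hcop : Nat.Coprime r p')
    (ζ : Fin r → ℚ) (hζP : memP ζ)
    (hdom : ∀ i : Fin (r - 1), ∃ m : ℕ, ip ζ (srootF i) = (m : ℚ))
    (hlevel : ip ζ (hroot r) ≤ (p' : ℚ) - r)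
    (μ : Fin r → ℚ) (hμ : memP μ) (w : Equiv.Perm (Fin r))
    (lam : Fin r → ℚ) (hlam : memQ lam)
    (h : (r : ℚ) • μ - weylδ r + pact w (weylδ r) = (r : ℚ) • lam)
    (σ : Equiv.Perm (Fin r)) (x : ℚ) :
    Nonempty
      ({α : Fin r → ℚ // (∃ β, memQ β ∧ α = μ + β) ∧ Fexp r p' ζ σ α = x} ≃
        {α : Fin r → ℚ // memQ α ∧ Fexp r p' ζ (w⁻¹ * σ) α = x}) :=
  stmt3_general r p' hr ζ μ w lam hlam h σ x
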